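/- Let P be a finite nonempty set of points in ℝ² and let r ∈ ℝ² be a point with r ∉ convexHull(P). Then there exist a point p ∈ P and a closed halfplane H such that P ⊆ H and both r and p lie on the boundary line of H. -/

import Mathlib

open Classical

noncomputable section

/-- Points in the plane. -/
abbrev Pt : Type := EuclideanSpace ℝ (Fin 2)

/-- The closed halfplane `{x : ⟪v, x⟫ ≤ c}`, bounded by the line `{x : ⟪v, x⟫ = c}`. -/
def halfplane (v : Pt) (c : ℝ) : Set Pt := {x | (inner ℝ v x : ℝ) ≤ c}

/-!
Separate `r` strictly from the convex hull of `P` by a direction `v`, so that `⟪v, q⟫ < ⟪v, r⟫`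
for every `q ∈ P`, and pick `w ≠ 0` orthogonal to `v`. Tilting `w` towards `v`, the normals
`w + t • v` support `P` at `r` exactly when `t` is at least every slope
`⟪w, q - r⟫ / ⟪v, r - q⟫`; the smallest such `t` is the maximal slope, attained at some `p ∈ P`,
and then the supporting line through `r` also passes through `p`.
-/

open Module RealInnerProductSpace

theorem Finset.exists_mem_forall_le_mul_eq_mul {ι : Type*} {s : Finset ι} (hs : s.Nonempty)
    (a b : ι → ℝ) (ha : ∀ i ∈ s, 0 < a i) :
    ∃ p ∈ s, ∃ t : ℝ, (∀ i ∈ s, b i ≤ t * a i) ∧ b p = t * a p := by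
  obtain ⟨p, hp, hmax⟩ := s.exists_max_image (fun i => b i / a i) hs
  exact ⟨p, hp, b p / a p, fun i hi => (div_le_iff₀ (ha i hi)).mp (hmax i hi),
    (div_mul_cancel₀ _ (ha p hp).ne').symm⟩

section InnerProductSpace

variable {E : Type*} [NormedAddCommGroup E] [InnerProductSpace ℝ E]

theorem exists_forall_inner_lt_of_notMem_of_convex [CompleteSpace E] {s : Set E} {x : E}
    (hconv : Convex ℝ s) (hclosed : IsClosed s) (hx : x ∉ s) :
    ∃ v : E, ∀ y ∈ s, ⟪v, y⟫ < ⟪v, x⟫ := by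
  obtain ⟨f, c, hfs, hfx⟩ := geometric_hahn_banach_closed_point hconv hclosed hx
  refine ⟨(InnerProductSpace.toDual ℝ E).symm f, fun y hy => ?_⟩
  simp only [InnerProductSpace.toDual_symm_apply]
  exact (hfs y hy).trans hfx

theorem exists_ne_zero_inner_eq_zero [FiniteDimensional ℝ E] (hE : 2 ≤ finrank ℝ E) (v : E) :
    ∃ w ≠ 0, ⟪v, w⟫ = 0 := by
  have hker : LinearMap.ker (innerₗ E v) ≠ ⊥ :=
    LinearMap.ker_ne_bot_of_finrank_lt (by rw [finrank_self ℝ]; omega)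
  obtain ⟨w, hw, hw0⟩ := Submodule.exists_mem_ne_zero_of_ne_bot hker
  exact ⟨w, hw0, hw⟩

theorem exists_add_smul_inner_le_inner_eq {s : Finset E} (hs : s.Nonempty) {x v : E}
    (hv : ∀ q ∈ s, ⟪v, q⟫ < ⟪v, x⟫) (w : E) :
    ∃ p ∈ s, ∃ t : ℝ, (∀ q ∈ s, ⟪w + t • v, q⟫ ≤ ⟪w + t • v, x⟫) ∧
      ⟪w + t • v, p⟫ = ⟪w + t • v, x⟫ := by
  obtain ⟨p, hp, t, hle, heq⟩ := s.exists_mem_forall_le_mul_eq_mul hs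
    (fun q => ⟪v, x⟫ - ⟪v, q⟫) (fun q => ⟪w, q⟫ - ⟪w, x⟫) (fun q hq => sub_pos.mpr (hv q hq))
  refine ⟨p, hp, t, fun q hq => ?_, ?_⟩
  · have := hle q hq
    simp only [inner_add_left, real_inner_smul_left]
    linarith
  · simp only [inner_add_left, real_inner_smul_left]
    linarith

theorem exists_supporting_inner_eq_of_notMem_convexHull [FiniteDimensional ℝ E]
    (hE : 2 ≤ finrank ℝ E) {s : Finset E} (hs : s.Nonempty) {x : E}
    (hx : x ∉ convexHull ℝ (s : Set E)) :
    ∃ p ∈ s, ∃ n : E, n ≠ 0 ∧ (∀ q ∈ s, ⟪n, q⟫ ≤ ⟪n, x⟫) ∧ ⟪n, p⟫ = ⟪n, x⟫ := by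
  obtain ⟨v, hv⟩ := exists_forall_inner_lt_of_notMem_of_convex (convex_convexHull ℝ _)
    (s.finite_toSet.isClosed_convexHull ℝ) hx
  obtain ⟨w, hw0, hvw⟩ := exists_ne_zero_inner_eq_zero hE v
  obtain ⟨p, hp, t, hle, heq⟩ := exists_add_smul_inner_le_inner_eq hs
    (fun q hq => hv q (subset_convexHull ℝ _ hq)) w
  have hn : w + t • v ≠ 0 := by
    intro h
    have : ⟪w + t • v, w⟫ = ⟪w, w⟫ := by
      rw [inner_add_left, real_inner_smul_left, real_inner_comm, hvw, mul_zero, add_zero]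
    rw [h, inner_zero_left, eq_comm, inner_self_eq_zero] at this
    exact hw0 this
  exact ⟨p, hp, w + t • v, hn, hle, heq⟩

end InnerProductSpace

/-- For a point `r` outside the convex hull of a finite nonempty point set `P`,
there is a point `p ∈ P` and a closed halfplane containing `P` whose boundary
line passes through both `r` and `p`. -/
theorem exists_tangent_halfplane (P : Finset Pt) (hP : P.Nonempty) (r : Pt)
    (hr : r ∉ convexHull ℝ (P : Set Pt)) :
    ∃ p ∈ P, ∃ (v : Pt) (c : ℝ), v ≠ 0 ∧ (P : Set Pt) ⊆ halfplane v c ∧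
      (inner ℝ v r : ℝ) = c ∧ (inner ℝ v p : ℝ) = c := by
  obtain ⟨p, hp, n, hn, hle, heq⟩ :=
    exists_supporting_inner_eq_of_notMem_convexHull (by simp) hP hr
  exact ⟨p, hp, n, ⟪n, r⟫, hn, hle, rfl, heq⟩
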